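/- For a finite loop Q, the union P^ω = ⋃_{i≥1} P^i(Q) is a subloop of Q (it is closed under multiplication, hence a subloop by finiteness). -/
import Mathlib


/-- A loop: a magma with two-sided identity in which all left and right
translations are bijections. -/
class Loop (Q : Type*) extends Mul Q, One Q where
  one_mul : ∀ a : Q, 1 * a = a
  mul_one : ∀ a : Q, a * 1 = a
  mulLeft_bijective : ∀ a : Q, Function.Bijective fun x : Q => a * x
  mulRight_bijective : ∀ a : Q, Function.Bijective fun x : Q => x * a

/-- `IsProdOf s x` means `x` can be written as a product, under some ordering
and association, whose multiset of factors is exactly `s`. -/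
inductive IsProdOf {Q : Type*} [Mul Q] : Multiset Q → Q → Prop
  | single (a : Q) : IsProdOf {a} a
  | mul {s t : Multiset Q} {a b : Q} :
      IsProdOf s a → IsProdOf t b → IsProdOf (s + t) (a * b)

/-- `fullProds Q k` is `P^k(Q)`: elements expressible as a product (in some
order and association) containing each element of `Q` exactly `k` times. -/
def fullProds (Q : Type*) [Mul Q] [Fintype Q] (k : ℕ) : Set Q :=
  {x | IsProdOf (k • (Finset.univ : Finset Q).val) x}

/-- The smallest congruence on `Q` whose quotient is a group; its class of `1`
is the associator subloop `A(Q)`, and its classes are the cosets of `A(Q)`. -/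
def assocRel {Q : Type*} [Mul Q] (x y : Q) : Prop :=
  ∀ r : Q → Q → Prop, Equivalence r →
    (∀ a b c d, r a b → r c d → r (a * c) (b * d)) →
    (∀ a b c, r ((a * b) * c) (a * (b * c))) →
    r x y

/-- The smallest congruence on `Q` whose quotient is an abelian group; its
class of `1` is the derived subloop `Q'`, and its classes are the cosets of `Q'`. -/
def commRel {Q : Type*} [Mul Q] (x y : Q) : Prop :=
  ∀ r : Q → Q → Prop, Equivalence r →
    (∀ a b c d, r a b → r c d → r (a * c) (b * d)) →
    (∀ a b c, r ((a * b) * c) (a * (b * c))) →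
    (∀ a b, r (a * b) (b * a)) →
    r x y

/-- `P^ω(Q) = ⋃_{i ≥ 1} P^i(Q)`. -/
def fullProdsOmega (Q : Type*) [Mul Q] [Fintype Q] : Set Q :=
  {x | ∃ k : ℕ, 1 ≤ k ∧ x ∈ fullProds Q k}

/-- A subloop: contains `1`, closed under multiplication and both divisions. -/
def IsSubloop (Q : Type*) [Loop Q] (S : Set Q) : Prop :=
  (1 : Q) ∈ S ∧
  (∀ a ∈ S, ∀ b ∈ S, a * b ∈ S) ∧
  (∀ a ∈ S, ∀ b ∈ S, ∀ x : Q, a * x = b → x ∈ S) ∧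
  (∀ a ∈ S, ∀ b ∈ S, ∀ x : Q, x * a = b → x ∈ S)

lemma exists_isProdOf {Q : Type*} [Mul Q] (s : Multiset Q) (h : s ≠ 0) :
    ∃ x, IsProdOf s x := by
  induction s using Multiset.induction with
  | empty => exact absurd rfl h
  | cons a t ih =>
    rcases eq_or_ne t 0 with rfl | ht
    · exact ⟨a, by simpa using IsProdOf.single a⟩
    · obtain ⟨x, hx⟩ := ih ht
      refine ⟨a * x, ?_⟩
      have : ({a} : Multiset Q) + t = a ::ₘ t := by simp
      exact this ▸ IsProdOf.mul (IsProdOf.single a) hx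

theorem fullProdsOmega_isSubloop (Q : Type*) [Loop Q] [Fintype Q] :
    IsSubloop Q (fullProdsOmega Q) := by
  set S := fullProdsOmega Q with hS
  have hmul : ∀ a ∈ S, ∀ b ∈ S, a * b ∈ S := by
    rintro a ⟨i, hi, ha⟩ b ⟨j, hj, hb⟩
    refine ⟨i + j, by omega, ?_⟩
    have := IsProdOf.mul ha hb
    simpa [fullProds, add_smul] using this
  have hne : S.Nonempty := by
    obtain ⟨x, hx⟩ := exists_isProdOf ((Finset.univ : Finset Q).val)
      (by
        intro h
        have := Finset.mem_univ (1 : Q)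
        rw [← Finset.mem_val, h] at this
        exact Multiset.notMem_zero 1 this)
    exact ⟨x, 1, le_refl 1, by simpa [fullProds] using hx⟩
  -- left division
  have hld : ∀ a ∈ S, ∀ b ∈ S, ∀ x : Q, a * x = b → x ∈ S := by
    intro a ha b hb x hx
    have : Function.Surjective (fun y : S => (⟨a * y, hmul a ha y y.2⟩ : S)) := by
      have hinj : Function.Injective (fun y : S => (⟨a * y, hmul a ha y y.2⟩ : S)) := by
        intro y z hyz
        exact Subtype.ext ((Loop.mulLeft_bijective a).1 (congrArg Subtype.val hyz))
      exact Finite.surjective_of_injective hinj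
    obtain ⟨⟨y, hy⟩, hay⟩ := this ⟨b, hb⟩
    have hay' : a * y = b := congrArg Subtype.val hay
    have : x = y := (Loop.mulLeft_bijective a).1 (by simp [hx, hay'])
    exact this ▸ hy
  have hrd : ∀ a ∈ S, ∀ b ∈ S, ∀ x : Q, x * a = b → x ∈ S := by
    intro a ha b hb x hx
    have : Function.Surjective (fun y : S => (⟨y * a, hmul y y.2 a ha⟩ : S)) := by
      have hinj : Function.Injective (fun y : S => (⟨y * a, hmul y y.2 a ha⟩ : S)) := by
        intro y z hyz
        exact Subtype.ext ((Loop.mulRight_bijective a).1 (congrArg Subtype.val hyz))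
      exact Finite.surjective_of_injective hinj
    obtain ⟨⟨y, hy⟩, hay⟩ := this ⟨b, hb⟩
    have hay' : y * a = b := congrArg Subtype.val hay
    have : x = y := (Loop.mulRight_bijective a).1 (by simp [hx, hay'])
    exact this ▸ hy
  obtain ⟨a, ha⟩ := hne
  exact ⟨hld a ha a ha 1 (Loop.mul_one a), hmul, hld, hrd⟩
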